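/- Let d ≥ 2, r ≥ 0, λ ≥ 0 and t > 0. Then σ_{d−1}(Q_{λ,t}(r)) ≤ σ_{d−1}({x ∈ ℝ^d : |x| = t}) = t^{d−1}·σ_{d−1}(S^{d−1}), where S^{d−1} is the unit sphere of ℝ^d. In particular σ_{d−1}(Q_{λ,t}(r)) ≤ c·t^{d−1} with a constant c depending only on d. -/

import Mathlib

open MeasureTheory Set
open scoped ENNReal NNReal

noncomputable section

abbrev E (d : ℕ) := EuclideanSpace ℝ (Fin d)

def e1 (d : ℕ) : E d := (EuclideanSpace.equiv (Fin d) ℝ).symm (fun i => if (i : ℕ) = 0 then 1 else 0)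

/-- `Q_{λ,t}(r) = {w ∈ ℝ^d : |w| = λ, |w - re₁| ≤ t}` -/
def Q (d : ℕ) (l t r : ℝ) : Set (E d) := {w | ‖w‖ = l ∧ ‖w - r • e1 d‖ ≤ t}

/-! The radial retraction `ballProj λ` onto the closed ball of radius `λ` is the metric projection
onto a convex set, hence 1-Lipschitz. Every point `q` of `Q_{λ,t}(r)` is the image of a point of the
sphere `|x - re₁| = t`: move outward along the ray through `q` until that sphere is hit. Lipschitz
maps do not increase Hausdorff measure, so `σ_{d-1}(Q_{λ,t}(r))` is at most the measure of a sphere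
of radius `t`, which scales like `t^{d-1}`. The unit sphere has finite measure because `ballProj 1`
maps the `2d` faces of the cube `[-1,1]^d` onto it, and each face is a Lipschitz image of a
`(d-1)`-dimensional cube. -/

open Metric Filter
open scoped InnerProductSpace Pointwise

section BallProj

variable {F : Type*} [NormedAddCommGroup F] [InnerProductSpace ℝ F]

def ballProj (l : ℝ) (x : F) : F := if ‖x‖ ≤ l then x else (l / ‖x‖) • x

theorem ballProj_of_norm_le {l : ℝ} {x : F} (h : ‖x‖ ≤ l) : ballProj l x = x := if_pos h

theorem ballProj_of_lt_norm {l : ℝ} {x : F} (h : l < ‖x‖) : ballProj l x = (l / ‖x‖) • x :=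
  if_neg h.not_ge

theorem norm_ballProj_le {l : ℝ} (hl : 0 ≤ l) (x : F) : ‖ballProj l x‖ ≤ l := by
  rcases le_or_gt ‖x‖ l with h | h
  · rwa [ballProj_of_norm_le h]
  · rw [ballProj_of_lt_norm h, norm_smul, Real.norm_of_nonneg (by positivity),
      div_mul_cancel₀ _ (hl.trans_lt h).ne']

theorem inner_sub_ballProj_nonpos (l : ℝ) (x : F) {z : F} (hz : ‖z‖ ≤ l) :
    ⟪x - ballProj l x, z - ballProj l x⟫_ℝ ≤ 0 := by
  rcases le_or_gt ‖x‖ l with h | h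
  · simp [ballProj_of_norm_le h]
  have hx : 0 < ‖x‖ := (norm_nonneg z).trans_lt (hz.trans_lt h)
  set a := l / ‖x‖
  have ha : a ≤ 1 := (div_le_one hx).2 h.le
  have hxz : ⟪x, z⟫_ℝ ≤ a * ‖x‖ ^ 2 := by
    have : a * ‖x‖ ^ 2 = ‖x‖ * l := by simp only [a]; field_simp
    rw [this]
    exact (real_inner_le_norm x z).trans (mul_le_mul_of_nonneg_left hz hx.le)
  have hsub : x - a • x = (1 - a) • x := by rw [sub_smul, one_smul]
  rw [ballProj_of_lt_norm h, hsub, inner_smul_left, inner_sub_right, inner_smul_right,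
    real_inner_self_eq_norm_sq]
  exact mul_nonpos_of_nonneg_of_nonpos (sub_nonneg.2 ha) (by simpa using hxz)

theorem lipschitzWith_one_of_inner_sub_nonpos {P : F → F}
    (hP : ∀ x y, ⟪x - P x, P y - P x⟫_ℝ ≤ 0) : LipschitzWith 1 P := by
  refine LipschitzWith.of_dist_le_mul fun x y => ?_
  rw [NNReal.coe_one, one_mul, dist_eq_norm, dist_eq_norm]
  have key : ‖P x - P y‖ ^ 2 ≤ ⟪x - y, P x - P y⟫_ℝ := by
    have h1 := hP x y
    have h2 := hP y x
    rw [← real_inner_self_eq_norm_sq]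
    simp only [inner_sub_left, inner_sub_right, real_inner_comm] at h1 h2 ⊢
    linarith
  nlinarith [real_inner_le_norm (x - y) (P x - P y), norm_nonneg (x - y), norm_nonneg (P x - P y)]

theorem lipschitzWith_ballProj {l : ℝ} (hl : 0 ≤ l) : LipschitzWith 1 (ballProj (F := F) l) :=
  lipschitzWith_one_of_inner_sub_nonpos fun x y =>
    inner_sub_ballProj_nonpos l x (norm_ballProj_le hl y)

theorem ballProj_smul_of_one_le {c : ℝ} {q : F} (hc : 1 ≤ c) : ballProj ‖q‖ (c • q) = q := by
  rcases eq_or_ne q 0 with rfl | hq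
  · simp [ballProj]
  have hq' : 0 < ‖q‖ := norm_pos_iff.2 hq
  have hcq : ‖c • q‖ = c * ‖q‖ := by rw [norm_smul, Real.norm_of_nonneg (by linarith)]
  rcases hc.eq_or_lt with rfl | hc
  · rw [one_smul, ballProj_of_norm_le le_rfl]
  rw [ballProj_of_lt_norm (by rw [hcq]; nlinarith), hcq, smul_smul,
    div_mul_cancel_right₀ hq'.ne', inv_mul_cancel₀ (by positivity), one_smul]

theorem exists_one_le_dist_smul_eq {q : F} (hq : q ≠ 0) (p : F) {t : ℝ} (ht : dist q p ≤ t) :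
    ∃ c : ℝ, 1 ≤ c ∧ dist (c • q) p = t := by
  have hcont : Continuous fun c : ℝ => dist (c • q) p := by fun_prop
  have htop : Tendsto (fun c : ℝ => dist (c • q) p) atTop atTop := by
    refine tendsto_atTop_mono (fun c => ?_)
      (tendsto_atTop_add_const_right _ (-‖p‖) (tendsto_id.atTop_mul_const (norm_pos_iff.2 hq)))
    have := norm_sub_norm_le (c • q) p
    rw [norm_smul] at this
    rw [dist_eq_norm, id]
    nlinarith [mul_le_mul_of_nonneg_right (Real.le_norm_self c) (norm_nonneg q)]
  simpa using intermediate_value_Ici hcont.continuousOn htop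
    (show dist ((1 : ℝ) • q) p ≤ t by rwa [one_smul])

theorem sphere_inter_closedBall_subset_image_ballProj [Nontrivial F] (l t : ℝ) (p : F) :
    sphere 0 l ∩ closedBall p t ⊆ ballProj l '' sphere p t := by
  rintro q ⟨hql, hqt⟩
  rw [mem_sphere_zero_iff_norm] at hql
  subst hql
  rcases eq_or_ne q 0 with rfl | hq
  · obtain ⟨z, hz⟩ := (NormedSpace.sphere_nonempty (x := p)).2 (dist_nonneg.trans hqt)
    exact ⟨z, hz, norm_le_zero_iff.1 (by simpa using norm_ballProj_le le_rfl z)⟩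
  obtain ⟨c, hc, hct⟩ := exists_one_le_dist_smul_eq hq p hqt
  exact ⟨c • q, hct, ballProj_smul_of_one_le hc⟩

end BallProj

section HausdorffMeasure

variable {F : Type*} [NormedAddCommGroup F] [MeasurableSpace F] [BorelSpace F]

theorem hausdorffMeasure_sphere_eq_sphere_zero [NormedSpace ℝ F] (s : ℝ) (p : F) (t : ℝ) :
    μH[s] (sphere p t) = μH[s] (sphere (0 : F) t) := by
  simpa using (IsometryEquiv.constVAdd p : F ≃ᵢ F).hausdorffMeasure_image s (sphere 0 t)

theorem hausdorffMeasure_sphere_zero_eq_rpow_mul [NormedSpace ℝ F] {s : ℝ} (hs : 0 ≤ s) {t : ℝ}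
    (ht : 0 < t) :
    μH[s] (sphere (0 : F) t) = ENNReal.ofReal (t ^ s) * μH[s] (sphere (0 : F) 1) := by
  have hsph : sphere (0 : F) t = t • sphere 0 1 := by
    rw [smul_sphere' ht.ne', smul_zero, Real.norm_of_nonneg ht.le, mul_one]
  rw [hsph, Measure.hausdorffMeasure_smul₀ hs ht.ne', ENNReal.smul_def, smul_eq_mul,
    ENNReal.coe_rpow_of_nonneg _ hs, ← ENNReal.ofReal_rpow_of_pos ht, ← Real.enorm_of_nonneg ht.le]
  rfl

theorem hausdorffMeasure_sphere_inter_closedBall_le [InnerProductSpace ℝ F] [Nontrivial F]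
    {s : ℝ} (hs : 0 ≤ s) (p : F) (l t : ℝ) :
    μH[s] (sphere 0 l ∩ closedBall p t) ≤ μH[s] (sphere (0 : F) t) := by
  rcases lt_or_ge l 0 with hl | hl
  · simp [sphere_eq_empty_of_neg hl]
  calc μH[s] (sphere 0 l ∩ closedBall p t)
      ≤ μH[s] (ballProj l '' sphere p t) :=
        measure_mono (sphere_inter_closedBall_subset_image_ballProj l t p)
    _ ≤ 1 ^ s * μH[s] (sphere p t) := (lipschitzWith_ballProj hl).hausdorffMeasure_image_le hs _
    _ = μH[s] (sphere (0 : F) t) := by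
        rw [ENNReal.one_rpow, one_mul, hausdorffMeasure_sphere_eq_sphere_zero]

end HausdorffMeasure

section SphereFinite

variable {m : ℕ}

theorem lipschitzWith_insertNth {β : Type*} [PseudoMetricSpace β] (i : Fin (m + 1)) (c : β) :
    LipschitzWith 1 (Fin.insertNth (α := fun _ => β) i c) := by
  refine LipschitzWith.of_dist_le_mul fun u v => ?_
  rw [NNReal.coe_one, one_mul, dist_pi_le_iff dist_nonneg]
  refine Fin.succAboveCases i ?_ fun k => ?_
  · simp
  · simpa using dist_le_pi_dist u v k

def cubeFace (i : Fin (m + 1)) (c : ℝ) (u : Fin m → ℝ) : EuclideanSpace ℝ (Fin (m + 1)) :=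
  WithLp.toLp 2 (Fin.insertNth i c u)

theorem lipschitzWith_cubeFace (i : Fin (m + 1)) (c : ℝ) :
    LipschitzWith (((m + 1 : ℕ) : ℝ≥0) ^ (1 / 2 : ℝ)) (cubeFace i c) := by
  convert (PiLp.lipschitzWith_toLp 2 fun _ : Fin (m + 1) => ℝ).comp (lipschitzWith_insertNth i c)
    using 1
  · simp
  · rfl

theorem sphere_subset_iUnion_image_cubeFace :
    sphere (0 : EuclideanSpace ℝ (Fin (m + 1))) 1 ⊆ ⋃ (i : Fin (m + 1)) (σ : SignType),
      ballProj 1 '' (cubeFace i σ '' closedBall 0 1) := by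
  intro x hx
  rw [mem_sphere_zero_iff_norm] at hx
  obtain ⟨i, hi⟩ := Finite.exists_max fun j => |x j|
  have hxi : 0 < |x i| := by
    by_contra! h
    have : x = 0 := by
      ext j
      exact abs_nonpos_iff.1 ((hi j).trans h)
    simp [this] at hx
  have hxi1 : |x i| ≤ 1 := by simpa [hx] using PiLp.norm_apply_le x i
  set u : Fin m → ℝ := fun k => |x i|⁻¹ * x (i.succAbove k)
  have hu : u ∈ closedBall 0 1 := by
    refine mem_closedBall_zero_iff.2 ((pi_norm_le_iff_of_nonneg zero_le_one).2 fun k => ?_)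
    rw [Real.norm_eq_abs, abs_mul, abs_inv, abs_abs, inv_mul_le_one₀ hxi]
    exact hi _
  have hface : cubeFace i (SignType.sign (x i)) u = |x i|⁻¹ • x := by
    ext j
    refine Fin.succAboveCases i ?_ (fun k => ?_) j
    · rw [cubeFace, PiLp.toLp_apply, Fin.insertNth_apply_same, PiLp.smul_apply, smul_eq_mul,
        eq_inv_mul_iff_mul_eq₀ hxi.ne', abs_mul_sign]
    · simp [cubeFace, u]
  refine mem_iUnion₂.2 ⟨i, SignType.sign (x i), _, ⟨u, hu, rfl⟩, ?_⟩
  rw [hface, ← hx]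
  exact ballProj_smul_of_one_le (one_le_inv₀ hxi |>.2 hxi1)

theorem hausdorffMeasure_sphere_lt_top :
    μH[m] (sphere (0 : EuclideanSpace ℝ (Fin (m + 1))) 1) < ∞ := by
  have hcube : μH[m] (closedBall (0 : Fin m → ℝ) 1) < ∞ := by
    have h := hausdorffMeasure_pi_real (ι := Fin m)
    rw [Fintype.card_fin] at h
    rw [h]
    exact (isCompact_closedBall _ _).measure_lt_top
  refine (measure_mono sphere_subset_iUnion_image_cubeFace).trans_lt ?_
  refine (measure_iUnion_fintype_le _ _).trans_lt (ENNReal.sum_lt_top.2 fun i _ => ?_)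
  refine (measure_iUnion_fintype_le _ _).trans_lt (ENNReal.sum_lt_top.2 fun σ _ => ?_)
  calc μH[m] (ballProj 1 '' (cubeFace i σ '' closedBall 0 1))
      ≤ μH[m] (cubeFace i σ '' closedBall 0 1) := by
        simpa using (lipschitzWith_ballProj zero_le_one).hausdorffMeasure_image_le m.cast_nonneg _
    _ ≤ _ ^ (m : ℝ) * μH[m] (closedBall (0 : Fin m → ℝ) 1) :=
        (lipschitzWith_cubeFace i σ).hausdorffMeasure_image_le m.cast_nonneg _
    _ < ∞ := ENNReal.mul_lt_top (by simp) hcube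

end SphereFinite

/-- `σ_{d-1}(Q_{λ,t}(r)) ≤ σ_{d-1}({|x|=t}) = t^{d-1}·σ_{d-1}(S^{d-1})`;
in particular `σ_{d-1}(Q_{λ,t}(r)) ≤ c·t^{d-1}` with `c` depending only on `d`. -/
theorem hausdorff_measure_Q_le (d : ℕ) (hd : 2 ≤ d) :
    (∀ r l t : ℝ, 0 ≤ r → 0 ≤ l → 0 < t →
      μH[(d : ℝ) - 1] (Q d l t r) ≤ μH[(d : ℝ) - 1] {x : E d | ‖x‖ = t} ∧
      μH[(d : ℝ) - 1] {x : E d | ‖x‖ = t} =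
        ENNReal.ofReal (t ^ (d - 1)) * μH[(d : ℝ) - 1] {x : E d | ‖x‖ = 1}) ∧
    ∃ c : ℝ≥0∞, c < ∞ ∧ ∀ r l t : ℝ, 0 ≤ r → 0 ≤ l → 0 < t →
      μH[(d : ℝ) - 1] (Q d l t r) ≤ c * ENNReal.ofReal (t ^ (d - 1)) := by
  obtain ⟨m, rfl⟩ : ∃ m, d = m + 1 := ⟨d - 1, by omega⟩
  have hdim : ((m + 1 : ℕ) : ℝ) - 1 = m := by push_cast; ring
  have hQ (r l t : ℝ) : Q (m + 1) l t r = sphere 0 l ∩ closedBall (r • e1 (m + 1)) t := by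
    ext w
    simp [Q, dist_eq_norm]
  have hsphere (t : ℝ) : {x : E (m + 1) | ‖x‖ = t} = sphere 0 t := by
    ext
    simp
  simp only [hdim, hQ, hsphere, Nat.add_sub_cancel, ← Real.rpow_natCast]
  refine ⟨fun r l t _ _ ht => ⟨hausdorffMeasure_sphere_inter_closedBall_le m.cast_nonneg _ l t,
    hausdorffMeasure_sphere_zero_eq_rpow_mul m.cast_nonneg ht⟩, μH[m] (sphere 0 1),
    hausdorffMeasure_sphere_lt_top, fun r l t _ _ ht => ?_⟩
  rw [mul_comm, ← hausdorffMeasure_sphere_zero_eq_rpow_mul m.cast_nonneg ht]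
  exact hausdorffMeasure_sphere_inter_closedBall_le m.cast_nonneg _ l t
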